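/- Under the conformal-block-expansion setup below, assume in addition: (i) there is τ_gap > 0 with τ_i ≥ τ_gap and p_i > 0 for every i ∈ I, and each i carries a spin ℓ_i ∈ ℕ; (ii) discreteness: for every Δ* ∈ ℝ the set {i ∈ I : τ_i + ℓ_i ≤ Δ*} is finite; (iii) approximate factorization: there exist 0 < a < b < 1, constants C₁, C₂ > 0 and functions F_i : (0,1) → (0,∞) such that for every i ∈ I with τ_i ≤ 2Δφ and all z, z̄ with 0 < z̄ ≤ a < b ≤ z < 1 one has C₁ · z̄^{τ_i/2} F_i(z) ≤ g_i(z, z̄) ≤ C₂ · z̄^{τ_i/2} F_i(z); (iv) individual logarithmic bounds: for every i ∈ I there is a finite C_i such that g_i(z, z̄) ≤ C_i · z̄^{τ_i/2} · log(4/(1−z)) for all 0 < z̄ ≤ a < b ≤ z < 1. Then there exists a sequence of pairwise distinct indices (i_k)_{k ∈ ℕ} in I such that τ_{i_k} → 2Δφ and ℓ_{i_k} → ∞ as k → ∞. -/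

import Mathlib

/-!
Suppose only finitely many twists lie within `ε` of `2Δφ`. The twist gap makes `g(z, z̄) - 1`
vanish as `z → 0`, so crossing gives `(1 - z) ^ Δφ (g(z, z̄) - 1) → (z̄ / (1 - z̄)) ^ Δφ` as
`z → 1`. At small `z̄` split the blocks: the finitely many twists near `2Δφ` grow only like
`log (4 / (1 - z))` and disappear in this limit; twists `≥ 2Δφ + ε` are bounded by rescaling `z̄`
up to `a`, and twists `≤ 2Δφ - ε` are bounded, through factorization, by their values at `z̄ ^ 2`.
In the limit the identity contribution `z̄ ^ Δφ` of the crossed channel would then be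
`O(z̄ ^ (Δφ + ε / 2))`, which is absurd as `z̄ → 0`. So `2Δφ` is an accumulation point of twists,
and discreteness of the spectrum forces the spins of the accumulating operators to infinity.
-/

open Set Filter

/-- A single conformal block contribution:
`g_i(z, z̄) = (z z̄)^(τᵢ/2) ∑_{n,m} a^{(i)}_{n,m} z^n z̄^m`. -/
noncomputable def blockFun (τi : ℝ) (coef : ℕ × ℕ → ℝ) (z zb : ℝ) : ℝ :=
  (z * zb) ^ (τi / 2) * ∑' nm : ℕ × ℕ, coef nm * z ^ nm.1 * zb ^ nm.2

open Topology

lemma tsum_coef_mul_pow_nonneg {c : ℕ × ℕ → ℝ} (hc : ∀ nm, 0 ≤ c nm) {z zb : ℝ}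
    (hz : 0 ≤ z) (hzb : 0 ≤ zb) : 0 ≤ ∑' nm : ℕ × ℕ, c nm * z ^ nm.1 * zb ^ nm.2 :=
  tsum_nonneg fun nm => mul_nonneg (mul_nonneg (hc nm) (pow_nonneg hz _)) (pow_nonneg hzb _)

lemma blockFun_nonneg {τi : ℝ} {c : ℕ × ℕ → ℝ} (hc : ∀ nm, 0 ≤ c nm)
    {z zb : ℝ} (hz : 0 ≤ z) (hzb : 0 ≤ zb) : 0 ≤ blockFun τi c z zb :=
  mul_nonneg (Real.rpow_nonneg (mul_nonneg hz hzb) _) (tsum_coef_mul_pow_nonneg hc hz hzb)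

lemma tsum_coef_mul_pow_le {c : ℕ × ℕ → ℝ} (hc : ∀ nm, 0 ≤ c nm) {z zb w wb : ℝ}
    (hz : 0 ≤ z) (hzb : 0 ≤ zb) (hzw : z ≤ w) (hzbw : zb ≤ wb)
    (hs : Summable fun nm : ℕ × ℕ => c nm * w ^ nm.1 * wb ^ nm.2) :
    ∑' nm : ℕ × ℕ, c nm * z ^ nm.1 * zb ^ nm.2 ≤ ∑' nm : ℕ × ℕ, c nm * w ^ nm.1 * wb ^ nm.2 := by
  have hle (nm : ℕ × ℕ) : c nm * z ^ nm.1 * zb ^ nm.2 ≤ c nm * w ^ nm.1 * wb ^ nm.2 :=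
    mul_le_mul (mul_le_mul_of_nonneg_left (pow_le_pow_left₀ hz hzw _) (hc nm))
      (pow_le_pow_left₀ hzb hzbw _) (pow_nonneg hzb _)
      (mul_nonneg (hc nm) (pow_nonneg (hz.trans hzw) _))
  have hnonneg (nm : ℕ × ℕ) : 0 ≤ c nm * z ^ nm.1 * zb ^ nm.2 :=
    mul_nonneg (mul_nonneg (hc nm) (pow_nonneg hz _)) (pow_nonneg hzb _)
  exact (hs.of_nonneg_of_le hnonneg hle).tsum_le_tsum hle hs

/-- Since `z z̄ ≤ w w̄`, lowering the exponent `τ` of the prefactor to `t` can only increase it. -/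
lemma blockFun_le_rpow_mul {τi t : ℝ} (htτ : t ≤ τi) {c : ℕ × ℕ → ℝ} (hc : ∀ nm, 0 ≤ c nm)
    {z zb w wb : ℝ} (hz : 0 < z) (hzb : 0 < zb) (hzw : z ≤ w) (hzbw : zb ≤ wb)
    (hs : Summable fun nm : ℕ × ℕ => c nm * w ^ nm.1 * wb ^ nm.2) :
    blockFun τi c z zb ≤ (z * zb / (w * wb)) ^ (t / 2) * blockFun τi c w wb := by
  have hw : 0 < w * wb := mul_pos (hz.trans_le hzw) (hzb.trans_le hzbw)
  set r := z * zb / (w * wb)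
  have hr : 0 < r := by positivity
  have hr1 : r ≤ 1 := div_le_one_of_le₀ (mul_le_mul hzw hzbw hzb.le (hz.le.trans hzw)) hw.le
  have hsplit : (z * zb) ^ (τi / 2) = r ^ (τi / 2) * (w * wb) ^ (τi / 2) := by
    rw [← Real.mul_rpow hr.le hw.le, div_mul_cancel₀ _ hw.ne']
  calc blockFun τi c z zb
      = r ^ (τi / 2) * ((w * wb) ^ (τi / 2) * ∑' nm : ℕ × ℕ, c nm * z ^ nm.1 * zb ^ nm.2) := by
        rw [blockFun, hsplit, mul_assoc]
    _ ≤ r ^ (t / 2) * ((w * wb) ^ (τi / 2) * ∑' nm : ℕ × ℕ, c nm * w ^ nm.1 * wb ^ nm.2) := by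
        refine mul_le_mul (Real.rpow_le_rpow_of_exponent_ge hr hr1 (by linarith)) ?_
          (mul_nonneg (Real.rpow_nonneg hw.le _) (tsum_coef_mul_pow_nonneg hc hz.le hzb.le))
          (Real.rpow_nonneg hr.le _)
        exact mul_le_mul_of_nonneg_left (tsum_coef_mul_pow_le hc hz.le hzb.le hzw hzbw hs)
          (Real.rpow_nonneg hw.le _)
    _ = r ^ (t / 2) * blockFun τi c w wb := rfl

lemma le_div_mul_rpow_mul_of_bounds {g g' x x' τ s C₁ C₂ F : ℝ} (hx' : 0 < x') (hx'x : x' ≤ x)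
    (hτs : τ ≤ s) (hC₁ : 0 < C₁) (hC₂ : 0 ≤ C₂) (hg' : 0 ≤ g')
    (hup : g ≤ C₂ * (x ^ (τ / 2) * F)) (hlow : C₁ * (x' ^ (τ / 2) * F) ≤ g') :
    g ≤ C₂ / C₁ * (x / x') ^ (s / 2) * g' := by
  have hq : 1 ≤ x / x' := (one_le_div hx').2 hx'x
  have hsplit : x ^ (τ / 2) = (x / x') ^ (τ / 2) * x' ^ (τ / 2) := by
    rw [← Real.mul_rpow (by positivity) hx'.le, div_mul_cancel₀ _ hx'.ne']
  calc g ≤ C₂ / C₁ * (x / x') ^ (τ / 2) * (C₁ * (x' ^ (τ / 2) * F)) :=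
        hup.trans_eq (by rw [hsplit]; field_simp)
    _ ≤ C₂ / C₁ * (x / x') ^ (τ / 2) * g' := by gcongr
    _ ≤ C₂ / C₁ * (x / x') ^ (s / 2) * g' := by gcongr

/-- Far from `2Δφ`, a block at `z̄ = x` is controlled by its value at `z̄ = a` if the twist is
high and, through factorization, by its value at `z̄ = x ^ 2` if it is low. -/
lemma blockFun_le_of_le_abs_sub {τi : ℝ} {c : ℕ × ℕ → ℝ} (hc : ∀ nm, 0 ≤ c nm)
    {Δφ ε a C₁ C₂ F z x : ℝ} (hε : 0 ≤ ε) (hfar : ε ≤ |τi - 2 * Δφ|) (hz : 0 < z) (hx : 0 < x)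
    (hxa : x ≤ a) (hx1 : x ≤ 1) (hC₁ : 0 < C₁) (hC₂ : 0 ≤ C₂)
    (hs : Summable fun nm : ℕ × ℕ => c nm * z ^ nm.1 * a ^ nm.2)
    (hfact : τi ≤ 2 * Δφ → ∀ y, 0 < y → y ≤ a →
      C₁ * (y ^ (τi / 2) * F) ≤ blockFun τi c z y ∧ blockFun τi c z y ≤ C₂ * (y ^ (τi / 2) * F)) :
    blockFun τi c z x ≤ (x / a) ^ ((2 * Δφ + ε) / 2) * blockFun τi c z a
      + C₂ / C₁ * (x / x ^ 2) ^ ((2 * Δφ - ε) / 2) * blockFun τi c z (x ^ 2) := by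
  have hx2 : 0 < x ^ 2 := pow_pos hx 2
  have hx2x : x ^ 2 ≤ x := pow_le_of_le_one hx.le hx1 two_ne_zero
  rcases le_abs.1 hfar with hhigh | hlow
  · have h := blockFun_le_rpow_mul (τi := τi) (t := 2 * Δφ + ε) (by linarith) hc hz hx le_rfl hxa hs
    rw [mul_div_mul_left _ _ hz.ne'] at h
    exact le_add_of_le_of_nonneg h (mul_nonneg
      (mul_nonneg (div_nonneg hC₂ hC₁.le) (Real.rpow_nonneg (by positivity) _))
      (blockFun_nonneg hc hz.le hx2.le))
  · have hτi : τi ≤ 2 * Δφ := by linarith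
    have ha : 0 ≤ a := hx.le.trans hxa
    refine le_add_of_nonneg_of_le (mul_nonneg (Real.rpow_nonneg (div_nonneg hx.le ha) _)
      (blockFun_nonneg hc hz.le ha)) ?_
    exact le_div_mul_rpow_mul_of_bounds hx2 hx2x (by linarith) hC₁ hC₂
      (blockFun_nonneg hc hz.le hx2.le) (hfact hτi x hx hxa).2
      (hfact hτi (x ^ 2) hx2 (hx2x.trans hxa)).1

lemma tsum_le_sum_add_tsum_of_le_compl {ι : Type*} {f g : ι → ℝ} (M : Finset ι)
    (hf : Summable f) (hg : Summable g) (hg0 : ∀ i, 0 ≤ g i) (hfg : ∀ i ∉ M, f i ≤ g i) :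
    ∑' i, f i ≤ ∑ i ∈ M, f i + ∑' i, g i := by
  rw [← hf.sum_add_tsum_compl (s := M)]
  gcongr
  calc ∑' i : ↑(↑M : Set ι)ᶜ, f i ≤ ∑' i : ↑(↑M : Set ι)ᶜ, g i :=
        (hf.subtype _).tsum_le_tsum (fun i => hfg i i.2) (hg.subtype _)
    _ ≤ ∑' i, g i := hg.tsum_subtype_le _ _ hg0

lemma tendsto_one_sub_nhdsLT_one : Tendsto (fun z : ℝ => 1 - z) (𝓝[<] 1) (𝓝[>] 0) := by
  refine tendsto_nhdsWithin_of_tendsto_nhds_of_eventually_within _ ?_ ?_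
  · simpa using ((continuous_sub_left (1:ℝ)).tendsto 1).mono_left nhdsWithin_le_nhds
  · filter_upwards [self_mem_nhdsWithin] with z hz
    exact sub_pos.2 (show z < 1 from hz)

lemma tendsto_rpow_nhdsGT_zero {r : ℝ} (hr : 0 < r) :
    Tendsto (fun u : ℝ => u ^ r) (𝓝[>] 0) (𝓝 0) := by
  have h := (Real.continuousAt_rpow_const 0 r (Or.inr hr.le)).tendsto.mono_left
    (nhdsWithin_le_nhds (s := Ioi 0))
  rwa [Real.zero_rpow hr.ne'] at h

lemma tendsto_rpow_mul_log_div_nhdsGT_zero {r c : ℝ} (hr : 0 < r) (hc : c ≠ 0) :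
    Tendsto (fun u : ℝ => u ^ r * Real.log (c / u)) (𝓝[>] 0) (𝓝 0) := by
  have h := ((tendsto_rpow_nhdsGT_zero hr).mul_const (Real.log c)).sub
    (tendsto_log_mul_rpow_nhdsGT_zero hr)
  rw [zero_mul, sub_zero] at h
  refine h.congr' ?_
  filter_upwards [self_mem_nhdsWithin] with u hu
  rw [Real.log_div hc (ne_of_gt hu)]
  ring

lemma tendsto_one_sub_rpow_mul_of_crossing {G : ℝ → ℝ → ℝ} {Δφ : ℝ} (hΔ : 0 < Δφ)
    (hcross : ∀ z zb : ℝ, z ∈ Ioo (0:ℝ) 1 → zb ∈ Ioo (0:ℝ) 1 →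
      1 + G z zb = (z * zb / ((1 - z) * (1 - zb))) ^ Δφ * (1 + G (1 - z) (1 - zb)))
    {v : ℝ} (hv : v ∈ Ioo (0:ℝ) 1) (hvanish : Tendsto (fun u => G u (1 - v)) (𝓝[>] 0) (𝓝 0)) :
    Tendsto (fun z => (1 - z) ^ Δφ * G z v) (𝓝[<] 1) (𝓝 ((v / (1 - v)) ^ Δφ)) := by
  have hprefactor : Tendsto (fun z : ℝ => (z * v / (1 - v)) ^ Δφ) (𝓝[<] 1)
      (𝓝 ((v / (1 - v)) ^ Δφ)) := by
    have hcont : ContinuousAt (fun z : ℝ => (z * v / (1 - v)) ^ Δφ) 1 :=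
      (by fun_prop : ContinuousAt (fun z : ℝ => z * v / (1 - v)) 1).rpow_const (Or.inr hΔ.le)
    simpa using hcont.tendsto.mono_left nhdsWithin_le_nhds
  have hlim := (hprefactor.mul ((tendsto_const_nhds (x := (1:ℝ))).add
    (hvanish.comp tendsto_one_sub_nhdsLT_one))).sub
    ((tendsto_rpow_nhdsGT_zero hΔ).comp tendsto_one_sub_nhdsLT_one)
  simp only [add_zero, mul_one, sub_zero] at hlim
  refine hlim.congr' ?_
  filter_upwards [Ioo_mem_nhdsLT (by norm_num : (0:ℝ) < 1)] with z hz
  have h1z : 0 < 1 - z := sub_pos.2 hz.2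
  have h1v : 0 < 1 - v := sub_pos.2 hv.2
  have hsplit : (z * v / (1 - v)) ^ Δφ
      = (1 - z) ^ Δφ * (z * v / ((1 - z) * (1 - v))) ^ Δφ := by
    rw [← Real.mul_rpow h1z.le
      (div_nonneg (mul_nonneg hz.1.le hv.1.le) (mul_nonneg h1z.le h1v.le))]
    congr 1
    field_simp
  simp only [Function.comp_apply]
  rw [hsplit, mul_assoc, ← hcross z v hz hv]
  ring

/-- The logarithmic term is killed by the prefactor `(1 - z) ^ Δφ` as `z → 1`. -/
lemma rpow_div_one_sub_le_of_eventually_le {G : ℝ → ℝ → ℝ} {Δφ : ℝ} (hΔ : 0 < Δφ)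
    (hlim : ∀ v ∈ Ioo (0:ℝ) 1,
      Tendsto (fun z => (1 - z) ^ Δφ * G z v) (𝓝[<] 1) (𝓝 ((v / (1 - v)) ^ Δφ)))
    {x y w C α β : ℝ} (hx : x ∈ Ioo (0:ℝ) 1) (hy : y ∈ Ioo (0:ℝ) 1) (hw : w ∈ Ioo (0:ℝ) 1)
    (hbound : ∀ᶠ z in 𝓝[<] 1, G z x ≤ C * Real.log (4 / (1 - z)) + α * G z y + β * G z w) :
    (x / (1 - x)) ^ Δφ ≤ α * (y / (1 - y)) ^ Δφ + β * (w / (1 - w)) ^ Δφ := by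
  have hlog := ((tendsto_rpow_mul_log_div_nhdsGT_zero hΔ four_ne_zero).comp
    tendsto_one_sub_nhdsLT_one).const_mul C
  have hrhs := (hlog.add ((hlim y hy).const_mul α)).add ((hlim w hw).const_mul β)
  rw [mul_zero, zero_add] at hrhs
  refine le_of_tendsto_of_tendsto (hlim x hx) hrhs ?_
  filter_upwards [hbound, self_mem_nhdsWithin] with z hz hz1
  have hpow : 0 ≤ (1 - z) ^ Δφ := Real.rpow_nonneg (sub_nonneg.2 (le_of_lt hz1)) _
  calc (1 - z) ^ Δφ * G z x
      ≤ (1 - z) ^ Δφ * (C * Real.log (4 / (1 - z)) + α * G z y + β * G z w) :=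
        mul_le_mul_of_nonneg_left hz hpow
    _ = _ := by simp only [Function.comp_apply]; ring

/-- Both terms on the left are `O(x ^ (Δφ + ε / 2))`, while the right side is `≥ x ^ Δφ`. -/
lemma exists_lt_rpow_div_one_sub {Δφ ε a C : ℝ} (hΔ : 0 < Δφ) (hε : 0 < ε) (ha : 0 < a)
    (ha1 : a < 1) (hC : 0 ≤ C) :
    ∃ x ∈ Ioc 0 a, (x / a) ^ ((2 * Δφ + ε) / 2) * (a / (1 - a)) ^ Δφ
      + C * (x / x ^ 2) ^ ((2 * Δφ - ε) / 2) * (x ^ 2 / (1 - x ^ 2)) ^ Δφ < (x / (1 - x)) ^ Δφ := by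
  set K := (a / (1 - a)) ^ Δφ / a ^ ((2 * Δφ + ε) / 2) + C / (1 - a ^ 2) ^ Δφ with hK
  have hbound : ∀ x ∈ Ioc 0 a, (x / a) ^ ((2 * Δφ + ε) / 2) * (a / (1 - a)) ^ Δφ
      + C * (x / x ^ 2) ^ ((2 * Δφ - ε) / 2) * (x ^ 2 / (1 - x ^ 2)) ^ Δφ
        ≤ x ^ Δφ * (K * x ^ (ε / 2)) := by
    rintro x ⟨hx, hxa⟩
    have hx2 : x ^ 2 < 1 := by nlinarith
    have hsplit : x ^ ((2 * Δφ + ε) / 2) = x ^ Δφ * x ^ (ε / 2) := by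
      rw [← Real.rpow_add hx]; ring_nf
    have hsq : (x ^ 2) ^ Δφ = x ^ ((2 * Δφ - ε) / 2) * (x ^ Δφ * x ^ (ε / 2)) := by
      rw [← Real.rpow_natCast_mul hx.le, ← hsplit, ← Real.rpow_add hx]; ring_nf
    have hden : (1 - a ^ 2) ^ Δφ ≤ (1 - x ^ 2) ^ Δφ :=
      Real.rpow_le_rpow (by nlinarith) (by nlinarith) hΔ.le
    have hxx : x / x ^ 2 = x⁻¹ := by field_simp
    rw [Real.div_rpow hx.le ha.le, hxx, Real.inv_rpow hx.le,
      Real.div_rpow (pow_nonneg hx.le 2) (sub_nonneg.2 hx2.le), hsq, hsplit]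
    have hden0 : 0 < (1 - a ^ 2) ^ Δφ := Real.rpow_pos_of_pos (by nlinarith) _
    calc x ^ Δφ * x ^ (ε / 2) / a ^ ((2 * Δφ + ε) / 2) * (a / (1 - a)) ^ Δφ
        + C * (x ^ ((2 * Δφ - ε) / 2))⁻¹
          * (x ^ ((2 * Δφ - ε) / 2) * (x ^ Δφ * x ^ (ε / 2)) / (1 - x ^ 2) ^ Δφ)
        = x ^ Δφ * x ^ (ε / 2) * ((a / (1 - a)) ^ Δφ / a ^ ((2 * Δφ + ε) / 2)
          + C / (1 - x ^ 2) ^ Δφ) := by field_simp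
      _ ≤ x ^ Δφ * x ^ (ε / 2) * K := by rw [hK]; gcongr
      _ = x ^ Δφ * (K * x ^ (ε / 2)) := by ring
  have hsmall : ∀ᶠ x in 𝓝[>] (0:ℝ), K * x ^ (ε / 2) < 1 := by
    have h := (tendsto_rpow_nhdsGT_zero (half_pos hε)).const_mul K
    rw [mul_zero] at h
    exact h.eventually_lt_const one_pos
  obtain ⟨x, hxK, hx⟩ := (hsmall.and (Ioc_mem_nhdsGT ha)).exists
  refine ⟨x, hx, (hbound x hx).trans_lt ?_⟩
  have hx1 : x < 1 := hx.2.trans_lt ha1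
  calc x ^ Δφ * (K * x ^ (ε / 2)) < x ^ Δφ := mul_lt_of_lt_one_right (by
        have := hx.1; positivity) hxK
    _ ≤ (x / (1 - x)) ^ Δφ :=
        Real.rpow_le_rpow hx.1.le (le_div_self hx.1.le (by linarith) (by linarith)) hΔ.le

/-- `g(z, z̄) - 1` in the notation of the crossing equation. -/
noncomputable def blockSum {I : Type*} (p τ : I → ℝ) (coef : I → ℕ × ℕ → ℝ) (z zb : ℝ) : ℝ :=
  ∑' i, p i * blockFun (τ i) (coef i) z zb

section blockSum

variable {I : Type*} {p τ : I → ℝ} {coef : I → ℕ × ℕ → ℝ}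

lemma blockSum_nonneg (hp : ∀ i, 0 ≤ p i) (hcoef : ∀ i nm, 0 ≤ coef i nm) {z zb : ℝ}
    (hz : 0 ≤ z) (hzb : 0 ≤ zb) : 0 ≤ blockSum p τ coef z zb :=
  tsum_nonneg fun i => mul_nonneg (hp i) (blockFun_nonneg (hcoef i) hz hzb)

/-- The twist gap makes every block vanish like `u ^ (τgap / 2)`, uniformly in `i`. -/
lemma tendsto_blockSum_nhdsGT_zero (hp : ∀ i, 0 ≤ p i) (hcoef : ∀ i nm, 0 ≤ coef i nm)
    (hinner : ∀ i, ∀ z zb : ℝ, 0 ≤ z → z < 1 → 0 ≤ zb → zb < 1 →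
      Summable (fun nm : ℕ × ℕ => coef i nm * z ^ nm.1 * zb ^ nm.2))
    (hsum : ∀ z zb : ℝ, z ∈ Ioo (0:ℝ) 1 → zb ∈ Ioo (0:ℝ) 1 →
      Summable (fun i => p i * blockFun (τ i) (coef i) z zb))
    {τgap : ℝ} (hgap : 0 < τgap) (hτgap : ∀ i, τgap ≤ τ i) {v : ℝ} (hv : v ∈ Ioo (0:ℝ) 1) :
    Tendsto (fun u => blockSum p τ coef u v) (𝓝[>] 0) (𝓝 0) := by
  have hhalf : (1 / 2 : ℝ) ∈ Ioo 0 1 := by norm_num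
  have hbound : ∀ u ∈ Ioc (0:ℝ) (1 / 2), blockSum p τ coef u v
      ≤ (u * v / (1 / 2 * v)) ^ (τgap / 2) * blockSum p τ coef (1 / 2) v := by
    rintro u ⟨hu, hu2⟩
    rw [blockSum, blockSum, ← tsum_mul_left]
    refine (hsum u v ⟨hu, hu2.trans_lt hhalf.2⟩ hv).tsum_le_tsum (fun i => ?_)
      ((hsum _ v hhalf hv).mul_left _)
    rw [mul_left_comm]
    exact mul_le_mul_of_nonneg_left (blockFun_le_rpow_mul (hτgap i) (hcoef i) hu hv.1 hu2 le_rfl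
      (hinner i _ v hhalf.1.le hhalf.2 hv.1.le hv.2)) (hp i)
  have hcont : ContinuousAt (fun u => (u * v / (1 / 2 * v)) ^ (τgap / 2)
      * blockSum p τ coef (1 / 2) v) 0 :=
    ((by fun_prop : ContinuousAt (fun u : ℝ => u * v / (1 / 2 * v)) 0).rpow_const
      (Or.inr (by positivity))).mul continuousAt_const
  have hlim := hcont.tendsto.mono_left (nhdsWithin_le_nhds (s := Ioi 0))
  simp only [zero_mul, zero_div, Real.zero_rpow (by positivity : τgap / 2 ≠ 0)] at hlim
  refine squeeze_zero' ?_ ?_ hlim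
  · filter_upwards [self_mem_nhdsWithin] with u hu
    exact blockSum_nonneg hp hcoef (le_of_lt hu) hv.1.le
  · filter_upwards [Ioc_mem_nhdsGT (by norm_num : (0:ℝ) < 1 / 2)] with u hu
    exact hbound u hu

lemma blockSum_le_of_le_abs_sub (hp : ∀ i, 0 ≤ p i) (hcoef : ∀ i nm, 0 ≤ coef i nm)
    (hinner : ∀ i, ∀ z zb : ℝ, 0 ≤ z → z < 1 → 0 ≤ zb → zb < 1 →
      Summable (fun nm : ℕ × ℕ => coef i nm * z ^ nm.1 * zb ^ nm.2))
    (hsum : ∀ z zb : ℝ, z ∈ Ioo (0:ℝ) 1 → zb ∈ Ioo (0:ℝ) 1 →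
      Summable (fun i => p i * blockFun (τ i) (coef i) z zb))
    {Δφ ε a C₁ C₂ z x L : ℝ} (F Ci : I → ℝ) (M : Finset I) (hε : 0 ≤ ε)
    (hM : ∀ i ∉ M, ε ≤ |τ i - 2 * Δφ|) (hz : z ∈ Ioo (0:ℝ) 1) (hx : 0 < x) (hxa : x ≤ a)
    (ha1 : a < 1) (hC₁ : 0 < C₁) (hC₂ : 0 ≤ C₂)
    (hfact : ∀ i, τ i ≤ 2 * Δφ → ∀ y, 0 < y → y ≤ a →
      C₁ * (y ^ (τ i / 2) * F i) ≤ blockFun (τ i) (coef i) z y ∧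
        blockFun (τ i) (coef i) z y ≤ C₂ * (y ^ (τ i / 2) * F i))
    (hlog : ∀ i, blockFun (τ i) (coef i) z x ≤ Ci i * x ^ (τ i / 2) * L) :
    blockSum p τ coef z x ≤ (∑ i ∈ M, p i * (Ci i * x ^ (τ i / 2))) * L
      + (x / a) ^ ((2 * Δφ + ε) / 2) * blockSum p τ coef z a
      + C₂ / C₁ * (x / x ^ 2) ^ ((2 * Δφ - ε) / 2) * blockSum p τ coef z (x ^ 2) := by
  have ha : 0 < a := hx.trans_le hxa
  have hx1 : x < 1 := hxa.trans_lt ha1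
  have hx2 : x ^ 2 ∈ Ioo (0:ℝ) 1 := ⟨pow_pos hx 2, pow_lt_one₀ hx.le hx1 two_ne_zero⟩
  set α := (x / a) ^ ((2 * Δφ + ε) / 2)
  set β := C₂ / C₁ * (x / x ^ 2) ^ ((2 * Δφ - ε) / 2)
  have hα : 0 ≤ α := Real.rpow_nonneg (div_nonneg hx.le ha.le) _
  have hβ : 0 ≤ β := mul_nonneg (div_nonneg hC₂ hC₁.le) (Real.rpow_nonneg (by positivity) _)
  have hsa := hsum z a hz ⟨ha, ha1⟩
  have hsx2 := hsum z (x ^ 2) hz hx2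
  have hmaj := (hsa.mul_left α).add (hsx2.mul_left β)
  have hfar (i : I) (hi : i ∉ M) : p i * blockFun (τ i) (coef i) z x
      ≤ α * (p i * blockFun (τ i) (coef i) z a)
        + β * (p i * blockFun (τ i) (coef i) z (x ^ 2)) := by
    have h := blockFun_le_of_le_abs_sub (hcoef i) hε (hM i hi) hz.1 hx hxa hx1.le hC₁ hC₂
      (hinner i z a hz.1.le hz.2 ha.le ha1) (hfact i)
    calc p i * blockFun (τ i) (coef i) z x ≤ p i * (α * blockFun (τ i) (coef i) z a
          + β * blockFun (τ i) (coef i) z (x ^ 2)) := mul_le_mul_of_nonneg_left h (hp i)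
      _ = _ := by ring
  have hnear : ∑ i ∈ M, p i * blockFun (τ i) (coef i) z x
      ≤ (∑ i ∈ M, p i * (Ci i * x ^ (τ i / 2))) * L := by
    rw [Finset.sum_mul]
    refine Finset.sum_le_sum fun i _ => ?_
    rw [mul_assoc]
    exact mul_le_mul_of_nonneg_left (hlog i) (hp i)
  have hnonneg (i : I) : 0 ≤ α * (p i * blockFun (τ i) (coef i) z a)
      + β * (p i * blockFun (τ i) (coef i) z (x ^ 2)) :=
    add_nonneg (mul_nonneg hα (mul_nonneg (hp i) (blockFun_nonneg (hcoef i) hz.1.le ha.le)))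
      (mul_nonneg hβ (mul_nonneg (hp i) (blockFun_nonneg (hcoef i) hz.1.le hx2.1.le)))
  have h := tsum_le_sum_add_tsum_of_le_compl M (hsum z x hz ⟨hx, hx1⟩) hmaj hnonneg hfar
  rw [hsa.mul_left α |>.tsum_add (hsx2.mul_left β), tsum_mul_left, tsum_mul_left] at h
  rw [blockSum, blockSum, blockSum]
  linarith

lemma infinite_setOf_abs_sub_lt {Δφ : ℝ} (hΔ : 0 < Δφ)
    (hp : ∀ i, 0 ≤ p i) (hcoef : ∀ i nm, 0 ≤ coef i nm)
    (hinner : ∀ i, ∀ z zb : ℝ, 0 ≤ z → z < 1 → 0 ≤ zb → zb < 1 →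
      Summable (fun nm : ℕ × ℕ => coef i nm * z ^ nm.1 * zb ^ nm.2))
    (hsum : ∀ z zb : ℝ, z ∈ Ioo (0:ℝ) 1 → zb ∈ Ioo (0:ℝ) 1 →
      Summable (fun i => p i * blockFun (τ i) (coef i) z zb))
    (hcross : ∀ z zb : ℝ, z ∈ Ioo (0:ℝ) 1 → zb ∈ Ioo (0:ℝ) 1 →
      1 + blockSum p τ coef z zb =
        (z * zb / ((1 - z) * (1 - zb))) ^ Δφ * (1 + blockSum p τ coef (1 - z) (1 - zb)))
    {τgap : ℝ} (hgap : 0 < τgap) (hτgap : ∀ i, τgap ≤ τ i)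
    {a b C₁ C₂ : ℝ} (ha : 0 < a) (hab : a < b) (hb : b < 1) (hC₁ : 0 < C₁) (hC₂ : 0 ≤ C₂)
    (F : I → ℝ → ℝ)
    (hfact : ∀ i, τ i ≤ 2 * Δφ → ∀ z zb : ℝ, 0 < zb → zb ≤ a → b ≤ z → z < 1 →
      C₁ * (zb ^ (τ i / 2) * F i z) ≤ blockFun (τ i) (coef i) z zb ∧
        blockFun (τ i) (coef i) z zb ≤ C₂ * (zb ^ (τ i / 2) * F i z))
    (hlog : ∀ i, ∃ Ci : ℝ, ∀ z zb : ℝ, 0 < zb → zb ≤ a → b ≤ z → z < 1 →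
      blockFun (τ i) (coef i) z zb ≤ Ci * zb ^ (τ i / 2) * Real.log (4 / (1 - z)))
    {ε : ℝ} (hε : 0 < ε) :
    {i | |τ i - 2 * Δφ| < ε}.Infinite := by
  intro hfin
  choose Ci hCi using hlog
  have ha1 : a < 1 := hab.trans hb
  have hlim (v : ℝ) (hv : v ∈ Ioo (0:ℝ) 1) := tendsto_one_sub_rpow_mul_of_crossing hΔ hcross hv
    (tendsto_blockSum_nhdsGT_zero hp hcoef hinner hsum hgap hτgap
      ⟨sub_pos.2 hv.2, sub_lt_self 1 hv.1⟩)
  have hkey : ∀ x ∈ Ioc 0 a, (x / (1 - x)) ^ Δφ ≤ (x / a) ^ ((2 * Δφ + ε) / 2) * (a / (1 - a)) ^ Δφ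
      + C₂ / C₁ * (x / x ^ 2) ^ ((2 * Δφ - ε) / 2) * (x ^ 2 / (1 - x ^ 2)) ^ Δφ := by
    rintro x ⟨hx, hxa⟩
    have hx1 : x < 1 := hxa.trans_lt ha1
    refine rpow_div_one_sub_le_of_eventually_le hΔ hlim
      (C := ∑ i ∈ hfin.toFinset, p i * (Ci i * x ^ (τ i / 2))) ⟨hx, hx1⟩ ⟨ha, ha1⟩
      ⟨pow_pos hx 2, pow_lt_one₀ hx.le hx1 two_ne_zero⟩ ?_
    filter_upwards [Ioo_mem_nhdsLT hb] with z hz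
    exact blockSum_le_of_le_abs_sub hp hcoef hinner hsum (fun i => F i z) Ci hfin.toFinset
      hε.le (fun i hi => not_lt.1 fun h => hi (hfin.mem_toFinset.2 h))
      ⟨(ha.trans hab).trans hz.1, hz.2⟩ hx hxa ha1 hC₁ hC₂
      (fun i hi y hy hya => hfact i hi z y hy hya hz.1.le hz.2)
      (fun i => hCi i z x hx hxa hz.1.le hz.2)
  obtain ⟨x, hx, hlt⟩ := exists_lt_rpow_div_one_sub hΔ hε ha ha1 (div_nonneg hC₂ hC₁.le)
  exact (hkey x hx).not_gt hlt

end blockSum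

lemma exists_injective_tendsto_of_infinite {ι X : Type*} [PseudoMetricSpace X] {f : ι → X}
    {c : X} (h : ∀ ε > 0, {i | dist (f i) c < ε}.Infinite) :
    ∃ seq : ℕ → ι, Function.Injective seq ∧ Tendsto (fun k => f (seq k)) atTop (𝓝 c) := by
  classical
  obtain ⟨g, hg, hlt⟩ := exists_seq_of_forall_finset_exists
    (fun q : ℕ × ι => dist (f q.2) c < 1 / (q.1 + 1)) (fun q q' => q.1 < q'.1 ∧ q.2 ≠ q'.2)
    fun s _ => by
      obtain ⟨i, hi, his⟩ := (h (1 / ((s.sup Prod.fst + 1 : ℕ) + 1)) (by positivity))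
        |>.exists_notMem_finset (s.image Prod.snd)
      exact ⟨(s.sup Prod.fst + 1, i), hi, fun q hq =>
        ⟨Nat.lt_succ_of_le (Finset.le_sup hq), fun he => his (Finset.mem_image.2 ⟨q, hq, he⟩)⟩⟩
  have hmono : StrictMono fun k => (g k).1 :=
    strictMono_nat_of_lt_succ fun k => (hlt _ _ k.lt_succ_self).1
  refine ⟨fun k => (g k).2, .of_lt_imp_ne fun m n hmn => (hlt m n hmn).2, ?_⟩
  rw [tendsto_iff_dist_tendsto_zero]
  refine squeeze_zero (fun _ => dist_nonneg) (fun k => (hg k).le.trans ?_)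
    tendsto_one_div_add_atTop_nhds_zero_nat
  gcongr
  exact_mod_cast hmono.le_apply

lemma tendsto_atTop_of_finite_setOf_add_le {ι : Type*} {τ : ι → ℝ} {ℓ : ι → ℕ}
    (hdisc : ∀ Δstar : ℝ, {i | τ i + ℓ i ≤ Δstar}.Finite) {seq : ℕ → ι}
    (hinj : Function.Injective seq) {c : ℝ} (hτ : Tendsto (fun k => τ (seq k)) atTop (𝓝 c)) :
    Tendsto (fun k => ℓ (seq k)) atTop atTop := by
  refine tendsto_atTop.2 fun N => ?_
  have hout : ∀ᶠ k in atTop, seq k ∉ {i | τ i + ℓ i ≤ c + 1 + N} := by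
    rw [← Nat.cofinite_eq_atTop]
    exact hinj.tendsto_cofinite.eventually ((hdisc _).eventually_cofinite_notMem)
  filter_upwards [hout, hτ.eventually_lt_const (lt_add_one c)] with k hk hτk
  have hk : c + 1 + N < τ (seq k) + ℓ (seq k) := not_le.1 hk
  exact_mod_cast (show (N : ℝ) < ℓ (seq k) by linarith).le

theorem stmt4_general {I : Type*} (Δφ : ℝ) (hΔ : 0 < Δφ)
    (p τ : I → ℝ) (coef : I → ℕ × ℕ → ℝ) (ℓ : I → ℕ)
    (hp : ∀ i, 0 < p i) (hcoef : ∀ i nm, 0 ≤ coef i nm)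
    (hinner : ∀ i, ∀ z zb : ℝ, 0 ≤ z → z < 1 → 0 ≤ zb → zb < 1 →
      Summable (fun nm : ℕ × ℕ => coef i nm * z ^ nm.1 * zb ^ nm.2))
    (hsum : ∀ z zb : ℝ, z ∈ Ioo (0:ℝ) 1 → zb ∈ Ioo (0:ℝ) 1 →
      Summable (fun i => p i * blockFun (τ i) (coef i) z zb))
    (hcross : ∀ z zb : ℝ, z ∈ Ioo (0:ℝ) 1 → zb ∈ Ioo (0:ℝ) 1 →
      1 + ∑' i, p i * blockFun (τ i) (coef i) z zb =
        (z * zb / ((1 - z) * (1 - zb))) ^ Δφ *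
          (1 + ∑' i, p i * blockFun (τ i) (coef i) (1 - z) (1 - zb)))
    -- (i) twist gap
    (τgap : ℝ) (hgap : 0 < τgap) (hτgap : ∀ i, τgap ≤ τ i)
    -- (ii) discreteness
    (hdisc : ∀ Δstar : ℝ, {i : I | τ i + ℓ i ≤ Δstar}.Finite)
    -- (iii) approximate factorization
    (a b : ℝ) (ha : 0 < a) (hab : a < b) (hb : b < 1)
    (C₁ C₂ : ℝ) (hC₁ : 0 < C₁) (hC₂ : 0 < C₂) (F : I → ℝ → ℝ)
    (hfact : ∀ i, τ i ≤ 2 * Δφ → ∀ z zb : ℝ, 0 < zb → zb ≤ a → b ≤ z → z < 1 →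
      C₁ * (zb ^ (τ i / 2) * F i z) ≤ blockFun (τ i) (coef i) z zb ∧
        blockFun (τ i) (coef i) z zb ≤ C₂ * (zb ^ (τ i / 2) * F i z))
    -- (iv) individual logarithmic bounds
    (hlog : ∀ i, ∃ Ci : ℝ, ∀ z zb : ℝ, 0 < zb → zb ≤ a → b ≤ z → z < 1 →
      blockFun (τ i) (coef i) z zb ≤ Ci * zb ^ (τ i / 2) * Real.log (4 / (1 - z))) :
    ∃ seq : ℕ → I, Function.Injective seq ∧
      Tendsto (fun k => τ (seq k)) atTop (nhds (2 * Δφ)) ∧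
      Tendsto (fun k => ℓ (seq k)) atTop atTop := by
  have hnear (ε : ℝ) (hε : 0 < ε) : {i | |τ i - 2 * Δφ| < ε}.Infinite :=
    infinite_setOf_abs_sub_lt hΔ (fun i => (hp i).le) hcoef hinner hsum hcross hgap hτgap
      ha hab hb hC₁ hC₂.le F hfact hlog hε
  obtain ⟨seq, hinj, hτseq⟩ := exists_injective_tendsto_of_infinite (f := τ) hnear
  exact ⟨seq, hinj, hτseq, tendsto_atTop_of_finite_setOf_add_le hdisc hinj hτseq⟩

/-- Theorem 2.1(b), twist accumulation at `2Δφ`: in the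
conformal-block-expansion setup with a twist gap, positive coefficients, a discrete
spectrum, approximate factorization, and individual logarithmic bounds, there is a
sequence of pairwise distinct indices with `τ_{i_k} → 2Δφ` and `ℓ_{i_k} → ∞`. -/
theorem stmt4 {I : Type*} [Countable I] (Δφ : ℝ) (hΔ : 0 < Δφ)
    (p τ : I → ℝ) (coef : I → ℕ × ℕ → ℝ) (ℓ : I → ℕ)
    (hp : ∀ i, 0 < p i) (hτ : ∀ i, 0 ≤ τ i) (hcoef : ∀ i nm, 0 ≤ coef i nm)
    (hinner : ∀ i, ∀ z zb : ℝ, 0 ≤ z → z < 1 → 0 ≤ zb → zb < 1 →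
      Summable (fun nm : ℕ × ℕ => coef i nm * z ^ nm.1 * zb ^ nm.2))
    (hsum : ∀ z zb : ℝ, z ∈ Ioo (0:ℝ) 1 → zb ∈ Ioo (0:ℝ) 1 →
      Summable (fun i => p i * blockFun (τ i) (coef i) z zb))
    (hcross : ∀ z zb : ℝ, z ∈ Ioo (0:ℝ) 1 → zb ∈ Ioo (0:ℝ) 1 →
      1 + ∑' i, p i * blockFun (τ i) (coef i) z zb =
        (z * zb / ((1 - z) * (1 - zb))) ^ Δφ *
          (1 + ∑' i, p i * blockFun (τ i) (coef i) (1 - z) (1 - zb)))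
    -- (i) twist gap
    (τgap : ℝ) (hgap : 0 < τgap) (hτgap : ∀ i, τgap ≤ τ i)
    -- (ii) discreteness
    (hdisc : ∀ Δstar : ℝ, {i : I | τ i + ℓ i ≤ Δstar}.Finite)
    -- (iii) approximate factorization
    (a b : ℝ) (ha : 0 < a) (hab : a < b) (hb : b < 1)
    (C₁ C₂ : ℝ) (hC₁ : 0 < C₁) (hC₂ : 0 < C₂) (F : I → ℝ → ℝ)
    (hFpos : ∀ i, ∀ z : ℝ, 0 < z → z < 1 → 0 < F i z)
    (hfact : ∀ i, τ i ≤ 2 * Δφ → ∀ z zb : ℝ, 0 < zb → zb ≤ a → b ≤ z → z < 1 →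
      C₁ * (zb ^ (τ i / 2) * F i z) ≤ blockFun (τ i) (coef i) z zb ∧
        blockFun (τ i) (coef i) z zb ≤ C₂ * (zb ^ (τ i / 2) * F i z))
    -- (iv) individual logarithmic bounds
    (hlog : ∀ i, ∃ Ci : ℝ, ∀ z zb : ℝ, 0 < zb → zb ≤ a → b ≤ z → z < 1 →
      blockFun (τ i) (coef i) z zb ≤ Ci * zb ^ (τ i / 2) * Real.log (4 / (1 - z))) :
    ∃ seq : ℕ → I, Function.Injective seq ∧
      Tendsto (fun k => τ (seq k)) atTop (nhds (2 * Δφ)) ∧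
      Tendsto (fun k => ℓ (seq k)) atTop atTop :=
  stmt4_general Δφ hΔ p τ coef ℓ hp hcoef hinner hsum hcross τgap hgap hτgap hdisc a b ha hab hb C₁
    C₂ hC₁ hC₂ F hfact hlog
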